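/- For a real number x with 0 ≤ x < 1 and a nonnegative integer k, the sum Σ_{n=k}^∞ n!·xⁿ/((n−k)!)² equals e^x · x^k · Σ_{i=0}^{k} (k!/i!)·C(k,i)·x^i, where C(k,i) is the binomial coefficient. -/

import Mathlib

/-!
Since `(n + k)! / (n!)² = k! · C(n + k, k) / n!` and, by Vandermonde, `C(n + k, k) = ∑ᵢ C(n, i) C(k, i)`,
the series splits into the `k + 1` series `∑ₙ C(n, i) xⁿ / n!`; shifting the index by `i` shows that
each of these is `eˣ xⁱ / i!`.
-/

open Nat Finset

lemma choose_mul_pow_div_factorial_add (x : ℝ) (n j : ℕ) :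
    ((n + j).choose j : ℝ) * x ^ (n + j) / (n + j)! = x ^ j / j ! * (x ^ n / n !) := by
  have h_fac : ((n + j).choose j : ℝ) * n ! * j ! = (n + j)! := by
    exact_mod_cast add_choose_mul_factorial_mul_factorial n j
  have h_pos : ((n + j).choose j : ℝ) ≠ 0 := by exact_mod_cast (choose_pos (le_add_left j n)).ne'
  rw [← h_fac, pow_add]
  field_simp

lemma hasSum_choose_mul_pow_div_factorial (x : ℝ) (j : ℕ) :
    HasSum (fun n : ℕ => (n.choose j : ℝ) * x ^ n / n !) (Real.exp x * x ^ j / j !) := by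
  have h_low : ∑ n ∈ range j, (n.choose j : ℝ) * x ^ n / n ! = 0 :=
    sum_eq_zero fun n hn => by simp [choose_eq_zero_of_lt (mem_range.1 hn)]
  rw [← hasSum_nat_add_iff' j, h_low, sub_zero]
  simp only [choose_mul_pow_div_factorial_add]
  rw [Real.exp_eq_exp_ℝ, mul_div_assoc, mul_comm]
  exact (NormedSpace.expSeries_div_hasSum_exp x).mul_left _

lemma factorial_add_mul_pow_div_factorial_sq (x : ℝ) (n k : ℕ) :
    ((n + k)! : ℝ) * x ^ (n + k) / (n ! : ℝ) ^ 2 =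
      ∑ i ∈ range (k + 1), k ! * k.choose i * x ^ k * ((n.choose i : ℝ) * x ^ n / n !) := by
  have h_fac : ((n + k).choose k : ℝ) * n ! * k ! = (n + k)! := by
    exact_mod_cast add_choose_mul_factorial_mul_factorial n k
  have h_vandermonde : ((n + k).choose k : ℝ) = ∑ i ∈ range (k + 1), (n.choose i : ℝ) * k.choose i := by
    rw_mod_cast [add_choose_eq, Nat.sum_antidiagonal_eq_sum_range_succ_mk]
    exact sum_congr rfl fun i hi => by rw [choose_symm (Nat.lt_succ_iff.1 (mem_range.1 hi))]
  rw [← h_fac, h_vandermonde, sum_mul, sum_mul, sum_mul, sum_div]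
  refine sum_congr rfl fun i _ => ?_
  rw [pow_add]
  field_simp

theorem stmt_1_general (x : ℝ) (k : ℕ) :
    ∑' n : ℕ, ((n + k).factorial : ℝ) * x ^ (n + k) / ((n.factorial : ℝ)) ^ 2 =
    Real.exp x * x ^ k * ∑ i ∈ Finset.range (k + 1),
      ((k.factorial : ℝ) / (i.factorial : ℝ)) * (Nat.choose k i : ℝ) * x ^ i := by
  simp only [factorial_add_mul_pow_div_factorial_sq]
  refine (hasSum_sum fun i _ => (hasSum_choose_mul_pow_div_factorial x i).mul_left _).tsum_eq.trans ?_
  rw [mul_sum]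
  refine sum_congr rfl fun i _ => ?_
  field_simp

theorem stmt_1 (x : ℝ) (hx0 : 0 ≤ x) (hx1 : x < 1) (k : ℕ) :
    ∑' n : ℕ, ((n + k).factorial : ℝ) * x ^ (n + k) / ((n.factorial : ℝ)) ^ 2 =
    Real.exp x * x ^ k * ∑ i ∈ Finset.range (k + 1),
      ((k.factorial : ℝ) / (i.factorial : ℝ)) * (Nat.choose k i : ℝ) * x ^ i :=
  stmt_1_general x k
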